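/- arXiv:math/0506350 — 2 statements merged into one kernel-verified Lean document; each statement's English description precedes it below -/
import Mathlib

section
/- Let E and F be p-dimensional real inner product spaces, let k be a symmetric bilinear form on F with k ≥ ⟨·,·⟩_F (i.e. k(v,v) ≥ ‖v‖² for all v ∈ F), let h be a positive semidefinite form on F with trace(h) ≤ 1, let h' be a positive semidefinite form on E with trace(h') ≤ 1, and let L : E → F be a linear map such that |k(L u, v)| ≤ c · h(v,v)^{1/2} · h'(u,u)^{1/2} for all u ∈ E, v ∈ F and some constant c > 0. Then |det L| ≤ (c/p)^p, where the determinant is computed with respect to orthonormal bases of E and F. -/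
/-!
If `L` is not injective, `det L = 0`. Otherwise take singular bases: orthonormal bases `e` of `E`
(eigenvectors of `L* L`) and `f` of `F` with `L eᵢ = σᵢ fᵢ`, `σᵢ > 0`, so that `|det L| = ∏ σᵢ`.
Since `k(fᵢ, fᵢ) ≥ ‖fᵢ‖² = 1`,
`σᵢ ≤ k(L eᵢ, fᵢ) ≤ c √h(fᵢ, fᵢ) √h'(eᵢ, eᵢ) ≤ c (h(fᵢ, fᵢ) + h'(eᵢ, eᵢ)) / 2`,
and these averages sum to at most `1` by the trace bounds, so AM–GM bounds their product by `p⁻ᵖ`.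
-/

open Module RealInnerProductSpace

theorem Real.prod_le_inv_card_pow_of_sum_le_one {ι : Type*} [Fintype ι] {z : ι → ℝ}
    (hz : ∀ i, 0 ≤ z i) (hsum : ∑ i, z i ≤ 1) :
    ∏ i, z i ≤ ((Fintype.card ι : ℝ)⁻¹) ^ Fintype.card ι := by
  rcases isEmpty_or_nonempty ι with hι | hι
  · simp
  set n := Fintype.card ι
  have hn : n ≠ 0 := Fintype.card_ne_zero
  have amgm : ∏ i, z i ^ (n⁻¹ : ℝ) ≤ ∑ i, (n : ℝ)⁻¹ * z i :=
    Real.geom_mean_le_arith_mean_weighted _ _ _ (fun _ _ => by positivity)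
      (by simp [n, Finset.card_univ]) (fun i _ => hz i)
  calc ∏ i, z i = (∏ i, z i ^ (n⁻¹ : ℝ)) ^ n := by
        rw [Real.finsetProd_rpow _ _ (fun i _ => hz i),
          Real.rpow_inv_natCast_pow (Finset.prod_nonneg fun i _ => hz i) hn]
    _ ≤ (∑ i, (n : ℝ)⁻¹ * z i) ^ n :=
        pow_le_pow_left₀ (Finset.prod_nonneg fun i _ => by have := hz i; positivity) amgm n
    _ ≤ ((n : ℝ)⁻¹) ^ n := by
        rw [← Finset.mul_sum]
        gcongr
        · exact mul_nonneg (by positivity) (Finset.sum_nonneg fun i _ => hz i)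
        · exact mul_le_of_le_one_right (by positivity) hsum

theorem Real.sqrt_mul_sqrt_le_add_div_two {a b : ℝ} (ha : 0 ≤ a) (hb : 0 ≤ b) :
    √a * √b ≤ (a + b) / 2 := by
  nlinarith [sq_nonneg (√a - √b), Real.sq_sqrt ha, Real.sq_sqrt hb]

theorem LinearMap.le_apply_smul_of_norm_sq_le {F : Type*} [SeminormedAddCommGroup F]
    [Module ℝ F] (k : F →ₗ[ℝ] F →ₗ[ℝ] ℝ) (hk : ∀ v, ‖v‖ ^ 2 ≤ k v v) {f : F} (hf : ‖f‖ = 1)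
    {σ : ℝ} (hσ : 0 ≤ σ) : σ ≤ k (σ • f) f := by
  rw [map_smul, LinearMap.smul_apply, smul_eq_mul]
  exact le_mul_of_one_le_right hσ (by simpa [hf] using hk f)

theorem LinearMap.abs_det_toMatrix_eq_prod {ι E F : Type*} [Fintype ι] [DecidableEq ι]
    [NormedAddCommGroup E] [InnerProductSpace ℝ E] [FiniteDimensional ℝ E]
    [NormedAddCommGroup F] [InnerProductSpace ℝ F] (L : E →ₗ[ℝ] F)
    (bE e : OrthonormalBasis ι ℝ E) (bF f : OrthonormalBasis ι ℝ F) {σ : ι → ℝ}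
    (hσ : ∀ i, 0 ≤ σ i) (hL : ∀ i, L (e i) = σ i • f i) :
    |(LinearMap.toMatrix bE.toBasis bF.toBasis L).det| = ∏ i, σ i := by
  have hdiag : LinearMap.toMatrix e.toBasis f.toBasis L = Matrix.diagonal σ := by
    ext i j
    rcases eq_or_ne i j with rfl | hij
    · simp [LinearMap.toMatrix_apply, hL]
    · simp [LinearMap.toMatrix_apply, hL, hij]
  rw [← Real.norm_eq_abs, ← L.normDet_eq_norm_det_toMatrix, L.normDet_eq_norm_det_toMatrix e f,
    hdiag, Matrix.det_diagonal, Real.norm_eq_abs,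
    abs_of_nonneg (Finset.prod_nonneg fun i _ => hσ i)]

theorem LinearMap.exists_orthonormalBasis_map_eq_smul {E F : Type*}
    [NormedAddCommGroup E] [InnerProductSpace ℝ E] [FiniteDimensional ℝ E]
    [NormedAddCommGroup F] [InnerProductSpace ℝ F] [FiniteDimensional ℝ F] {n : ℕ}
    (L : E →ₗ[ℝ] F) (hL : Function.Injective L) (hE : finrank ℝ E = n) (hF : finrank ℝ F = n) :
    ∃ (e : OrthonormalBasis (Fin n) ℝ E) (f : OrthonormalBasis (Fin n) ℝ F) (σ : Fin n → ℝ),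
      (∀ i, 0 < σ i) ∧ ∀ i, L (e i) = σ i • f i := by
  let e := L.isSymmetric_adjoint_comp_self.eigenvectorBasis hE
  have horth : Pairwise fun i j => ⟪L (e i), L (e j)⟫ = 0 := by
    intro i j hij
    rw [← LinearMap.adjoint_inner_right, ← LinearMap.comp_apply,
      L.isSymmetric_adjoint_comp_self.apply_eigenvectorBasis, real_inner_smul_right,
      e.orthonormal.2 hij, mul_zero]
  have hne : ∀ i, L (e i) ≠ 0 := fun i =>
    (map_ne_zero_iff L hL).mpr (e.orthonormal.ne_zero i)
  let v i := ‖L (e i)‖⁻¹ • L (e i)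
  have hv : Orthonormal ℝ v := ⟨fun i => norm_smul_inv_norm (hne i), fun i j hij => by
    simp [v, real_inner_smul_left, real_inner_smul_right, horth hij]⟩
  let f := OrthonormalBasis.mk hv
    (hv.linearIndependent.span_eq_top_of_card_eq_finrank' (by simp [hF])).ge
  refine ⟨e, f, fun i => ‖L (e i)‖, fun i => norm_pos_iff.mpr (hne i), fun i => ?_⟩
  simp [f, v, smul_smul, hne i]

theorem stmt6_general {E F : Type*} [NormedAddCommGroup E] [InnerProductSpace ℝ E]
    [NormedAddCommGroup F] [InnerProductSpace ℝ F] {p : ℕ}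
    (k h : F →ₗ[ℝ] F →ₗ[ℝ] ℝ) (h' : E →ₗ[ℝ] E →ₗ[ℝ] ℝ)
    (hk : ∀ v : F, ‖v‖ ^ 2 ≤ k v v)
    (hhpsd : ∀ v, 0 ≤ h v v)
    (hh'psd : ∀ u, 0 ≤ h' u u)
    (htrh : ∀ b : OrthonormalBasis (Fin p) ℝ F, ∑ i, h (b i) (b i) ≤ 1)
    (htrh' : ∀ b : OrthonormalBasis (Fin p) ℝ E, ∑ i, h' (b i) (b i) ≤ 1)
    (c : ℝ) (hc : 0 < c) (L : E →ₗ[ℝ] F)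
    (hcs : ∀ (u : E) (v : F), |k (L u) v| ≤ c * Real.sqrt (h v v) * Real.sqrt (h' u u)) :
    ∀ (bE : OrthonormalBasis (Fin p) ℝ E) (bF : OrthonormalBasis (Fin p) ℝ F),
      |(LinearMap.toMatrix bE.toBasis bF.toBasis L).det| ≤ (c / (p : ℝ)) ^ p := by
  intro bE bF
  have := bE.toBasis.finiteDimensional_of_finite
  have := bF.toBasis.finiteDimensional_of_finite
  by_cases hL : Function.Injective L
  swap
  · rw [← Real.norm_eq_abs, ← L.normDet_eq_norm_det_toMatrix bE bF,
      LinearMap.normDet_eq_zero_iff_ker_ne_bot.mpr (by rwa [Ne, LinearMap.ker_eq_bot])]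
    positivity
  obtain ⟨e, f, σ, hσ, hLe⟩ := L.exists_orthonormalBasis_map_eq_smul hL
    (by simpa using finrank_eq_card_basis bE.toBasis)
    (by simpa using finrank_eq_card_basis bF.toBasis)
  let z i := (h (f i) (f i) + h' (e i) (e i)) / 2
  have hσz i : σ i ≤ c * z i := calc
    σ i ≤ k (L (e i)) (f i) :=
        hLe i ▸ k.le_apply_smul_of_norm_sq_le hk (f.norm_eq_one i) (hσ i).le
    _ ≤ c * √(h (f i) (f i)) * √(h' (e i) (e i)) := (le_abs_self _).trans (hcs _ _)
    _ ≤ c * z i := by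
        rw [mul_assoc]
        exact mul_le_mul_of_nonneg_left
          (Real.sqrt_mul_sqrt_le_add_div_two (hhpsd _) (hh'psd _)) hc.le
  have hz i : 0 ≤ z i := by have := hhpsd (f i); have := hh'psd (e i); positivity
  have hsum : ∑ i, z i ≤ 1 := by
    simp only [z, ← Finset.sum_div, Finset.sum_add_distrib]
    linarith [htrh f, htrh' e]
  calc |(LinearMap.toMatrix bE.toBasis bF.toBasis L).det|
      = ∏ i, σ i := L.abs_det_toMatrix_eq_prod bE e bF f (fun i => (hσ i).le) hLe
    _ ≤ ∏ i, c * z i := Finset.prod_le_prod (fun i _ => (hσ i).le) (fun i _ => hσz i)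
    _ = c ^ p * ∏ i, z i := by simp [Finset.prod_mul_distrib]
    _ ≤ c ^ p * (p : ℝ)⁻¹ ^ p := by
        gcongr
        simpa using Real.prod_le_inv_card_pow_of_sum_le_one hz hsum
    _ = (c / p) ^ p := by rw [div_eq_mul_inv, mul_pow]

/-- Jacobian estimate in linear-algebraic form: if `k ≥ ⟨·,·⟩` on `F`, `h`, `h'` are
positive semidefinite with traces at most `1`, and
`|k(Lu,v)| ≤ c √h(v,v) √h'(u,u)`, then `|det L| ≤ (c/p)^p` with respect to
orthonormal bases. -/
theorem stmt6 {E F : Type*} [NormedAddCommGroup E] [InnerProductSpace ℝ E]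
    [NormedAddCommGroup F] [InnerProductSpace ℝ F] {p : ℕ} (hp : 0 < p)
    (hdimE : Module.finrank ℝ E = p) (hdimF : Module.finrank ℝ F = p)
    (k h : F →ₗ[ℝ] F →ₗ[ℝ] ℝ) (h' : E →ₗ[ℝ] E →ₗ[ℝ] ℝ)
    (hksymm : ∀ v w, k v w = k w v)
    (hk : ∀ v : F, ‖v‖ ^ 2 ≤ k v v)
    (hhsymm : ∀ v w, h v w = h w v) (hhpsd : ∀ v, 0 ≤ h v v)
    (hh'symm : ∀ u w, h' u w = h' w u) (hh'psd : ∀ u, 0 ≤ h' u u)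
    (htrh : ∀ b : OrthonormalBasis (Fin p) ℝ F, ∑ i, h (b i) (b i) ≤ 1)
    (htrh' : ∀ b : OrthonormalBasis (Fin p) ℝ E, ∑ i, h' (b i) (b i) ≤ 1)
    (c : ℝ) (hc : 0 < c) (L : E →ₗ[ℝ] F)
    (hcs : ∀ (u : E) (v : F), |k (L u) v| ≤ c * Real.sqrt (h v v) * Real.sqrt (h' u u)) :
    ∀ (bE : OrthonormalBasis (Fin p) ℝ E) (bF : OrthonormalBasis (Fin p) ℝ F),
      |(LinearMap.toMatrix bE.toBasis bF.toBasis L).det| ≤ (c / (p : ℝ)) ^ p :=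
  stmt6_general k h h' hk hhpsd hh'psd htrh htrh' c hc L hcs
end

section
/- Let a group C act by isometries on a metric space X̃, properly discontinuously, and let Z̃ ⊆ X̃ be a C-invariant subset. Suppose there exists a group Γ of isometries of X̃ containing C, acting cocompactly on X̃ (i.e. there is a compact K ⊆ X̃ with Γ·K = X̃), and a Γ-equivariant continuous map f̃ : X̃ → T to a metric space T on which Γ acts by isometries, such that Z̃ = f̃⁻¹(t₀), the Γ-orbit of t₀ is discrete in T, and the stabilizer of t₀ in Γ equals C. Then the quotient Z̃/C is compact, i.e. every sequence (z_n) in Z̃ has a subsequence (z_{n_k}) and elements γ_k ∈ C such that γ_k · z_{n_k} converges in X̃. -/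
/-!
Translate each `z n` into the compact set `K` by some `g n ∈ Γ` and extract a convergent
subsequence `g n • z n → x`. By equivariance `f (g n • z n) = g n • t₀`, so these points of the
orbit of `t₀` converge to `f x`. Since `Γ` acts isometrically, a discrete orbit is uniformly
discrete, so the sequence `g n • t₀` is eventually constant, equal to `g N • t₀`; then
`(g N)⁻¹ * g n` lies in the stabilizer `C`, and `((g N)⁻¹ * g n) • z n → (g N)⁻¹ • x`.
-/

open Filter Topology MulAction

section

variable {Γ T : Type*} [Group Γ] [PseudoMetricSpace T] [MulAction Γ T]

theorem exists_pos_smul_eq_of_dist_smul_lt (hiso : ∀ γ : Γ, Isometry fun t : T => γ • t)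
    (t₀ : T) [DiscreteTopology (orbit Γ t₀)] :
    ∃ ε > 0, ∀ γ δ : Γ, dist (γ • t₀) (δ • t₀) < ε → γ • t₀ = δ • t₀ := by
  obtain ⟨ε, hε, hball⟩ := Metric.isOpen_iff.mp
    (isOpen_discrete {(⟨t₀, mem_orbit_self t₀⟩ : orbit Γ t₀)}) _ rfl
  refine ⟨ε, hε, fun γ δ hdist => ?_⟩
  have hdist' : dist ((γ⁻¹ * δ) • t₀) t₀ < ε := by
    rwa [dist_comm, ← (hiso γ).dist_eq, smul_smul, mul_inv_cancel_left]
  have hfix : (γ⁻¹ * δ) • t₀ = t₀ :=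
    congrArg Subtype.val (hball (a := ⟨_, mem_orbit t₀ (γ⁻¹ * δ)⟩) hdist')
  conv_lhs => rw [← hfix]
  rw [smul_smul, mul_inv_cancel_left]

end

theorem CauchySeq.exists_forall_ge_eq_of_separated {T β : Type*} [PseudoMetricSpace T]
    [Nonempty β] [SemilatticeSup β] {u : β → T} (hu : CauchySeq u) {ε : ℝ} (hε : 0 < ε)
    (hsep : ∀ m n, dist (u m) (u n) < ε → u m = u n) : ∃ N, ∀ n ≥ N, u n = u N := by
  obtain ⟨N, hN⟩ := Metric.cauchySeq_iff'.mp hu ε hε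
  exact ⟨N, fun n hn => hsep n N (hN n hn)⟩

theorem stmt11_general {Γ X T : Type*} [Group Γ] [MetricSpace X] [MetricSpace T]
    [MulAction Γ X] [MulAction Γ T]
    (hisoX : ∀ γ : Γ, Isometry fun x : X => γ • x)
    (hisoT : ∀ γ : Γ, Isometry fun t : T => γ • t)
    (C : Subgroup Γ)
    (K : Set X) (hK : IsCompact K) (hcocpt : ∀ x : X, ∃ γ : Γ, γ • x ∈ K)
    (f : X → T) (hf : Continuous f) (hequiv : ∀ (γ : Γ) (x : X), f (γ • x) = γ • f x)
    (t₀ : T) (horb : DiscreteTopology ↥(MulAction.orbit Γ t₀))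
    (hstab : MulAction.stabilizer Γ t₀ = C)
    (Z : Set X) (hZ : Z = f ⁻¹' {t₀}) :
    ∀ z : ℕ → X, (∀ n, z n ∈ Z) →
      ∃ (φ : ℕ → ℕ) (γ : ℕ → C) (x : X), StrictMono φ ∧
        Filter.Tendsto (fun n => (γ n : Γ) • z (φ n)) Filter.atTop (nhds x) := by
  subst hZ
  intro z hz
  choose g hgK using fun n => hcocpt (z n)
  obtain ⟨x, -, φ, hφ, hlim⟩ := hK.tendsto_subseq hgK
  have hfg : ∀ n, f (g n • z n) = g n • t₀ := fun n => by rw [hequiv, hz n]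
  have hlimT : Tendsto (fun n => g (φ n) • t₀) atTop (𝓝 (f x)) := by
    simpa only [Function.comp_def, hfg] using (hf.tendsto x).comp hlim
  obtain ⟨ε, hε, hsep⟩ := exists_pos_smul_eq_of_dist_smul_lt hisoT t₀
  obtain ⟨N, hN⟩ := hlimT.cauchySeq.exists_forall_ge_eq_of_separated hε
    fun m n => hsep (g (φ m)) (g (φ n))
  have hmemC : ∀ n, (g (φ N))⁻¹ * g (φ (n + N)) ∈ C := fun n => by
    rw [← hstab, mem_stabilizer_iff, mul_smul, hN (n + N) (Nat.le_add_left N n), inv_smul_smul]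
  refine ⟨fun n => φ (n + N), fun n => ⟨_, hmemC n⟩, (g (φ N))⁻¹ • x,
    hφ.comp fun a b h => Nat.add_lt_add_right h N, ?_⟩
  have hshift := hlim.comp (tendsto_add_atTop_nat N)
  simpa only [Function.comp_def, mul_smul] using
    ((hisoX (g (φ N))⁻¹).continuous.tendsto x).comp hshift

/-- Lemma 2.3 of the paper: the level set `Z = f⁻¹(t₀)` of a `Γ`-equivariant
continuous map to a metric space with discrete orbit of `t₀` and stabilizer `C`
has compact quotient `Z/C`: every sequence in `Z` has a subsequence which converges
after translating by elements of `C`. -/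
theorem stmt11 {Γ X T : Type*} [Group Γ] [MetricSpace X] [MetricSpace T]
    [MulAction Γ X] [MulAction Γ T]
    (hisoX : ∀ γ : Γ, Isometry fun x : X => γ • x)
    (hisoT : ∀ γ : Γ, Isometry fun t : T => γ • t)
    (C : Subgroup Γ) [ProperlyDiscontinuousSMul C X]
    (K : Set X) (hK : IsCompact K) (hcocpt : ∀ x : X, ∃ γ : Γ, γ • x ∈ K)
    (f : X → T) (hf : Continuous f) (hequiv : ∀ (γ : Γ) (x : X), f (γ • x) = γ • f x)
    (t₀ : T) (horb : DiscreteTopology ↥(MulAction.orbit Γ t₀))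
    (hstab : MulAction.stabilizer Γ t₀ = C)
    (Z : Set X) (hZ : Z = f ⁻¹' {t₀}) :
    ∀ z : ℕ → X, (∀ n, z n ∈ Z) →
      ∃ (φ : ℕ → ℕ) (γ : ℕ → C) (x : X), StrictMono φ ∧
        Filter.Tendsto (fun n => (γ n : Γ) • z (φ n)) Filter.atTop (nhds x) :=
  stmt11_general hisoX hisoT C K hK hcocpt f hf hequiv t₀ horb hstab Z hZ
end
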